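/- Weakening for unrestricted bindings: in the same linear lambda calculus, if Γ ⊢ e : U is derivable and pri(T) = ⊤, then Γ, x:T ⊢ e : U is derivable (for fresh x). -/
import Mathlib


/-- Priorities: integers extended with ⊥ and ⊤. -/
abbrev Prio := WithBot (WithTop ℤ)

/-- Types of a minimal linear lambda calculus: unit, linear arrows and
unrestricted arrows. -/
inductive Ty : Type where
  | unit : Ty
  | arrLin : Ty → Ty → Ty
  | arrUn : Ty → Ty → Ty

/-- Priority of a type: linear arrows have priority < ⊤; unit and
unrestricted arrows have priority ⊤. -/
def Ty.pri : Ty → Prio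
  | .unit => ⊤
  | .arrLin _ _ => ((0 : ℤ) : Prio)
  | .arrUn _ _ => ⊤

/-- Terms: variables, unit, lambda abstraction, application. -/
inductive Tm : Type where
  | var : ℕ → Tm
  | unit : Tm
  | lam : ℕ → Ty → Tm → Tm
  | app : Tm → Tm → Tm

/-- Free variables. -/
def Tm.fv : Tm → Finset ℕ
  | .var x => {x}
  | .unit => ∅
  | .lam x _ e => e.fv \ {x}
  | .app e₁ e₂ => e₁.fv ∪ e₂.fv

/-- Typing contexts. -/
abbrev Ctx := List (ℕ × Ty)

/-- All bindings of a context are unrestricted. -/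
def Unr (Γ : Ctx) : Prop := ∀ p ∈ Γ, (Prod.snd p).pri = ⊤

/-- Context split: unrestricted bindings are shared, linear bindings go to
exactly one side. -/
inductive Split : Ctx → Ctx → Ctx → Prop where
  | nil : Split [] [] []
  | top {Γ Γ₁ Γ₂ : Ctx} {x : ℕ} {T : Ty} :
      Split Γ Γ₁ Γ₂ → T.pri = ⊤ → Split ((x, T) :: Γ) ((x, T) :: Γ₁) ((x, T) :: Γ₂)
  | left {Γ Γ₁ Γ₂ : Ctx} {x : ℕ} {T : Ty} :
      Split Γ Γ₁ Γ₂ → T.pri < ⊤ → Split ((x, T) :: Γ) ((x, T) :: Γ₁) Γ₂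
  | right {Γ Γ₁ Γ₂ : Ctx} {x : ℕ} {T : Ty} :
      Split Γ Γ₁ Γ₂ → T.pri < ⊤ → Split ((x, T) :: Γ) Γ₁ ((x, T) :: Γ₂)

/-- Typing judgement of the minimal linear lambda calculus. -/
inductive HasTy : Ctx → Tm → Ty → Prop where
  | var {Γ : Ctx} {x : ℕ} {T : Ty} :
      (x, T) ∈ Γ → (∀ y U, (y, U) ∈ Γ → y ≠ x → Ty.pri U = ⊤) →
      HasTy Γ (.var x) T
  | unit {Γ : Ctx} : Unr Γ → HasTy Γ .unit .unit
  | lamLin {Γ : Ctx} {x : ℕ} {T U : Ty} {e : Tm} :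
      HasTy ((x, T) :: Γ) e U → HasTy Γ (.lam x T e) (.arrLin T U)
  | lamUn {Γ : Ctx} {x : ℕ} {T U : Ty} {e : Tm} :
      Unr Γ → HasTy ((x, T) :: Γ) e U → HasTy Γ (.lam x T e) (.arrUn T U)
  | appLin {Γ Γ₁ Γ₂ : Ctx} {e₁ e₂ : Tm} {T U : Ty} :
      Split Γ Γ₁ Γ₂ → HasTy Γ₁ e₁ (.arrLin T U) → HasTy Γ₂ e₂ T →
      HasTy Γ (.app e₁ e₂) U
  | appUn {Γ Γ₁ Γ₂ : Ctx} {e₁ e₂ : Tm} {T U : Ty} :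
      Split Γ Γ₁ Γ₂ → HasTy Γ₁ e₁ (.arrUn T U) → HasTy Γ₂ e₂ T →
      HasTy Γ (.app e₁ e₂) U


lemma split_perm {Γ Γ' Γ₁ Γ₂ : Ctx} (hp : Γ.Perm Γ') (h : Split Γ Γ₁ Γ₂) :
    ∃ Γ₁' Γ₂', Γ₁.Perm Γ₁' ∧ Γ₂.Perm Γ₂' ∧ Split Γ' Γ₁' Γ₂' := by
  induction hp generalizing Γ₁ Γ₂ with
  | nil => exact ⟨Γ₁, Γ₂, .refl _, .refl _, h⟩
  | cons a _ ih =>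
    cases h with
    | top h ht =>
      obtain ⟨A, B, p1, p2, s⟩ := ih h
      exact ⟨_, _, p1.cons _, p2.cons _, s.top ht⟩
    | left h ht =>
      obtain ⟨A, B, p1, p2, s⟩ := ih h
      exact ⟨_, _, p1.cons _, p2, s.left ht⟩
    | right h ht =>
      obtain ⟨A, B, p1, p2, s⟩ := ih h
      exact ⟨_, _, p1, p2.cons _, s.right ht⟩
  | swap a b l =>
    cases h with
    | top h ht =>
      cases h with
      | top h ht' => exact ⟨_, _, .swap _ _ _, .swap _ _ _, (h.top ht).top ht'⟩
      | left h ht' => exact ⟨_, _, .swap _ _ _, .refl _, (h.top ht).left ht'⟩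
      | right h ht' => exact ⟨_, _, .refl _, .swap _ _ _, (h.top ht).right ht'⟩
    | left h ht =>
      cases h with
      | top h ht' => exact ⟨_, _, .swap _ _ _, .refl _, (h.left ht).top ht'⟩
      | left h ht' => exact ⟨_, _, .swap _ _ _, .refl _, (h.left ht).left ht'⟩
      | right h ht' => exact ⟨_, _, .refl _, .refl _, (h.left ht).right ht'⟩
    | right h ht =>
      cases h with
      | top h ht' => exact ⟨_, _, .refl _, .swap _ _ _, (h.right ht).top ht'⟩
      | left h ht' => exact ⟨_, _, .refl _, .refl _, (h.right ht).left ht'⟩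
      | right h ht' => exact ⟨_, _, .refl _, .swap _ _ _, (h.right ht).right ht'⟩
  | trans _ _ ih1 ih2 =>
    obtain ⟨A, B, p1, p2, s⟩ := ih1 h
    obtain ⟨A', B', q1, q2, s'⟩ := ih2 s
    exact ⟨A', B', p1.trans q1, p2.trans q2, s'⟩

lemma hasTy_perm {Γ Γ' : Ctx} {e : Tm} {U : Ty} (h : HasTy Γ e U)
    (hp : Γ.Perm Γ') : HasTy Γ' e U := by
  induction h generalizing Γ' with
  | var hm hc =>
    exact .var (hp.mem_iff.mp hm) (fun y V hyV hne => hc y V (hp.mem_iff.mpr hyV) hne)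
  | unit hu => exact .unit (fun p hp' => hu p (hp.mem_iff.mpr hp'))
  | lamLin _ ih => exact .lamLin (ih (hp.cons _))
  | lamUn hu _ ih =>
    exact .lamUn (fun p hp' => hu p (hp.mem_iff.mpr hp')) (ih (hp.cons _))
  | appLin hs _ _ ih1 ih2 =>
    obtain ⟨A, B, p1, p2, s⟩ := split_perm hp hs
    exact .appLin s (ih1 p1) (ih2 p2)
  | appUn hs _ _ ih1 ih2 =>
    obtain ⟨A, B, p1, p2, s⟩ := split_perm hp hs
    exact .appUn s (ih1 p1) (ih2 p2)

lemma weakening' {Γ : Ctx} {x : ℕ} {T U : Ty} {e : Tm}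
    (h : HasTy Γ e U) (hT : T.pri = ⊤) : HasTy ((x, T) :: Γ) e U := by
  induction h with
  | @var Γ z V hm hc =>
    refine .var (List.mem_cons_of_mem _ hm) (fun y W hyW hne => ?_)
    rcases List.mem_cons.mp hyW with h' | h'
    · cases h'; exact hT
    · exact hc y W h' hne
  | unit hu =>
    refine .unit (fun p hp => ?_)
    rcases List.mem_cons.mp hp with h' | h'
    · cases h'; exact hT
    · exact hu p h'
  | lamLin _ ih => exact .lamLin (hasTy_perm ih (List.Perm.swap _ _ _))
  | lamUn hu _ ih =>
    refine .lamUn (fun p hp => ?_) (hasTy_perm ih (List.Perm.swap _ _ _))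
    rcases List.mem_cons.mp hp with h' | h'
    · cases h'; exact hT
    · exact hu p h'
  | appLin hs _ _ ih1 ih2 => exact .appLin (hs.top hT) ih1 ih2
  | appUn hs _ _ ih1 ih2 => exact .appUn (hs.top hT) ih1 ih2

/-- Weakening for unrestricted bindings: if `Γ ⊢ e : U`, `pri T = ⊤`, and `x`
is fresh for `Γ`, then `Γ, x:T ⊢ e : U`. -/
theorem weakening {Γ : Ctx} {x : ℕ} {T U : Ty} {e : Tm}
    (h : HasTy Γ e U) (hT : T.pri = ⊤) (hx : ∀ U', (x, U') ∉ Γ) :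
    HasTy ((x, T) :: Γ) e U :=
  weakening' h hT
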